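/- arXiv:dg-ga/9703007 — 3 statements merged into one kernel-verified Lean document; each statement's English description precedes it below -/
import Mathlib

section
/- Let ρ: G → N be a group homomorphism from the Artin group G = ⟨x_i, x_j | (x_i x_j)^q = (x_j x_i)^q⟩ (the Artin group with edge label 2q) to a torsion-free nilpotent group N. Then ρ(x_i) and ρ(x_j) commute. -/
/-!
Since `b * a = a⁻¹ * (a * b) * a`, the relation `(a * b) ^ q = (b * a) ^ q` says that `a` commutes
with `(a * b) ^ q`. In a torsion-free nilpotent group an element commutes with whatever one of its
nonzero powers commutes with: inside the centralizer of `x ^ n` the power `x ^ n` is central, and the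
centre is isolated. That follows by descending the upper central series from `Z_c = G`: if
`x ∈ Z_{j+2}` and `x ^ n ∈ Z_{j+1}`, each commutator `⁅x, g⁆ ∈ Z_{j+1}` is central modulo `Z_j`, so
`⁅x, g⁆ ^ n ≡ ⁅x ^ n, g⁆ ≡ 1` there; by induction on `j`, with torsion-freeness as the base case,
`⁅x, g⁆ ∈ Z_j`, that is, `x ∈ Z_{j+1}`.
-/

/-- The relation set of the two–generator Artin group with even edge label `2q`:
`(x y)^q = (y x)^q`, generators indexed by `Bool`. -/
def artinEvenRels (q : ℕ) : Set (FreeGroup Bool) :=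
  {(FreeGroup.of true * FreeGroup.of false) ^ q *
      ((FreeGroup.of false * FreeGroup.of true) ^ q)⁻¹}

open scoped commutatorElement

section TorsionFreeNilpotent

variable {G : Type*} [Group G]

theorem commutatorElement_pow_left_of_commute {a b : G} (h : Commute ⁅a, b⁆ a) (n : ℕ) :
    ⁅a ^ n, b⁆ = ⁅a, b⁆ ^ n := by
  induction n with
  | zero => simp
  | succ n ih =>
    calc ⁅a ^ (n + 1), b⁆ = a * ⁅a ^ n, b⁆ * a⁻¹ * ⁅a, b⁆ := by
          simp only [commutatorElement_def, pow_succ']; group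
      _ = ⁅a, b⁆ ^ (n + 1) := by
          rw [ih, ← (h.pow_left n).eq, pow_succ]; group

namespace Subgroup

theorem mem_upperCentralSeries_of_pow_mem (hG : ∀ g : G, g ≠ 1 → ¬IsOfFinOrder g) {n : ℕ}
    (hn : n ≠ 0) (j : ℕ) {x : G} (hx : x ∈ upperCentralSeries G (j + 1))
    (hxn : x ^ n ∈ upperCentralSeries G j) : x ∈ upperCentralSeries G j := by
  induction j generalizing x with
  | zero =>
    rw [upperCentralSeries_zero, mem_bot] at hxn ⊢
    by_contra hx1
    exact hG x hx1 (isOfFinOrder_iff_pow_eq_one.mpr ⟨n, Nat.pos_of_ne_zero hn, hxn⟩)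
  | succ j ih =>
    rw [mem_upperCentralSeries_succ_iff]
    intro g
    refine ih (mem_upperCentralSeries_succ_iff.mp hx g) ?_
    let π := QuotientGroup.mk' (upperCentralSeries G j)
    have hcentral : ⁅x, g⁆ ∈ comap π (center _) := by
      rw [← upperCentralSeriesStep_eq_comap_center]
      exact hx g
    have hcomm : Commute ⁅π x, π g⁆ (π x) := by
      rw [← map_commutatorElement]
      exact (mem_center_iff.mp hcentral (π x)).symm
    have hpow : π (⁅x, g⁆ ^ n) = 1 := by
      rw [map_pow, map_commutatorElement, ← commutatorElement_pow_left_of_commute hcomm,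
        ← map_pow, ← map_commutatorElement]
      exact (QuotientGroup.eq_one_iff _).mpr (hxn g)
    exact (QuotientGroup.eq_one_iff _).mp hpow

theorem mem_center_of_pow_mem_center [Group.IsNilpotent G]
    (hG : ∀ g : G, g ≠ 1 → ¬IsOfFinOrder g) {n : ℕ} (hn : n ≠ 0) {x : G}
    (hxn : x ^ n ∈ center G) : x ∈ center G := by
  rw [← upperCentralSeries_one] at hxn ⊢
  have descend : ∀ k, x ∈ upperCentralSeries G (k + 1) → x ∈ upperCentralSeries G 1 := by
    intro k
    induction k with
    | zero => exact id
    | succ k ih =>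
      exact fun hx => ih (mem_upperCentralSeries_of_pow_mem hG hn (k + 1) hx
        (upperCentralSeries_mono G (by omega) hxn))
  obtain ⟨c, hc⟩ := Group.IsNilpotent.nilpotent G
  exact descend c (upperCentralSeries_mono G c.le_succ (hc ▸ mem_top x))

end Subgroup

open Subgroup

theorem commute_of_commute_pow_left [Group.IsNilpotent G]
    (hG : ∀ g : G, g ≠ 1 → ¬IsOfFinOrder g) {n : ℕ} (hn : n ≠ 0) {x y : G}
    (h : Commute (x ^ n) y) : Commute x y := by
  let H := centralizer {x ^ n}
  have hxH : x ∈ H := mem_centralizer_singleton_iff.mpr (Commute.self_pow x n).eq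
  have hyH : y ∈ H := mem_centralizer_singleton_iff.mpr h.eq.symm
  have hHG : ∀ g : H, g ≠ 1 → ¬IsOfFinOrder g := fun g hg hfin =>
    hG g (by simpa using hg) (H.subtype.isOfFinOrder hfin)
  have hpow : (⟨x, hxH⟩ : H) ^ n ∈ center H := by
    rw [mem_center_iff]
    intro g
    exact Subtype.ext (mem_centralizer_singleton_iff.mp g.2)
  have hcentral := mem_center_of_pow_mem_center hHG hn hpow
  exact congrArg Subtype.val (mem_center_iff.mp hcentral ⟨y, hyH⟩).symm

theorem commute_of_mul_pow_eq_mul_pow_swap [Group.IsNilpotent G]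
    (hG : ∀ g : G, g ≠ 1 → ¬IsOfFinOrder g) {q : ℕ} (hq : q ≠ 0) {a b : G}
    (h : (a * b) ^ q = (b * a) ^ q) : Commute a b := by
  have hsemi : SemiconjBy a (b * a) (a * b) := (mul_assoc a b a).symm
  have hpow : Commute a ((a * b) ^ q) := by
    have := hsemi.pow_right q
    rwa [← h] at this
  have hab : Commute (a * b) a := commute_of_commute_pow_left hG hq hpow.symm
  exact (mul_left_cancel (a := a) (by simpa only [mul_assoc] using hab.eq)).symm

end TorsionFreeNilpotent

theorem artinEvenRels_relation (q : ℕ) :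
    ((PresentedGroup.of true * PresentedGroup.of false : PresentedGroup (artinEvenRels q))) ^ q =
      (PresentedGroup.of false * PresentedGroup.of true) ^ q := by
  have h := PresentedGroup.mk_eq_mk_of_mul_inv_mem (rels := artinEvenRels q) rfl
  simp only [map_pow, map_mul] at h
  exact h

/-- Any homomorphism from the Artin group `⟨x, y | (xy)^q = (yx)^q⟩` (edge label `2q`)
to a torsion-free nilpotent group `N` sends the generators to commuting elements. -/
theorem stmt_7 (q : ℕ) (hq : 1 ≤ q) (N : Type) [Group N] [Group.IsNilpotent N]
    (hN : ∀ g : N, g ≠ 1 → ¬IsOfFinOrder g)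
    (ρ : PresentedGroup (artinEvenRels q) →* N) :
    Commute (ρ (PresentedGroup.of true)) (ρ (PresentedGroup.of false)) :=
  commute_of_mul_pow_eq_mul_pow_swap hN (Nat.one_le_iff_ne_zero.mp hq) <| by
    simpa only [map_pow, map_mul] using congrArg ρ (artinEvenRels_relation q)
end

section
/- Let ρ: G → N be a homomorphism from the Artin group G = ⟨x_i, x_j | (x_i x_j)^q x_i = (x_j x_i)^q x_j⟩ (edge label 2q+1) to a torsion-free nilpotent group N. Then ρ(x_i) = ρ(x_j). -/
/-! In a nilpotent group `(ab)^q a = (ba)^q b` forces `a = b`. Induct on the nilpotency class: in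
`G ⧸ center G` the images of `a` and `b` agree, so `b = a z` with `z` central; then `a` and `b`
commute, the relation reads `(ab)^q a = (ab)^q b`, and cancelling gives `a = b`. -/

/-- The relation set of the two–generator Artin group with odd edge label `2q+1`:
`(x y)^q x = (y x)^q y`, generators indexed by `Bool`. -/
def artinOddRels (q : ℕ) : Set (FreeGroup Bool) :=
  {(FreeGroup.of true * FreeGroup.of false) ^ q * FreeGroup.of true *
      ((FreeGroup.of false * FreeGroup.of true) ^ q * FreeGroup.of false)⁻¹}

theorem Commute.eq_of_mul_pow_mul_eq {M : Type*} [LeftCancelMonoid M] {a b : M}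
    (hab : Commute a b) {q : ℕ} (h : (a * b) ^ q * a = (b * a) ^ q * b) : a = b := by
  rw [hab.eq] at h
  exact mul_left_cancel h

theorem eq_of_mul_pow_mul_eq_of_isNilpotent {G : Type*} [Group G] [Group.IsNilpotent G]
    {q : ℕ} {a b : G} (h : (a * b) ^ q * a = (b * a) ^ q * b) : a = b := by
  refine Group.nilpotent_center_quotient_ind
    (P := fun G _ _ => ∀ a b : G, (a * b) ^ q * a = (b * a) ^ q * b → a = b) G ?_ ?_ a b h
  · intro G _ _ a b _
    exact Subsingleton.elim a b
  · intro G _ _ ih a b h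
    have hmk : (a : G ⧸ Subgroup.center G) = b :=
      ih _ _ (congrArg (QuotientGroup.mk' _) h)
    have hz : Commute a (a⁻¹ * b) := Subgroup.mem_center_iff.mp (QuotientGroup.eq.mp hmk) a
    have hab : Commute a b := by
      simpa only [mul_inv_cancel_left] using (Commute.refl a).mul_right hz
    exact hab.eq_of_mul_pow_mul_eq h

theorem PresentedGroup.artinOddRels_relation (q : ℕ) :
    ((of true * of false) ^ q * of true : PresentedGroup (artinOddRels q)) =
      (of false * of true) ^ q * of false :=
  mk_eq_mk_of_mul_inv_mem (Set.mem_singleton _)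

theorem stmt_8_general (q : ℕ) (N : Type) [Group N] [Group.IsNilpotent N]
    (ρ : PresentedGroup (artinOddRels q) →* N) :
    ρ (PresentedGroup.of true) = ρ (PresentedGroup.of false) := by
  have h := congrArg ρ (PresentedGroup.artinOddRels_relation q)
  simp only [map_mul, map_pow] at h
  exact eq_of_mul_pow_mul_eq_of_isNilpotent h

/-- Any homomorphism from the Artin group `⟨x, y | (xy)^q x = (yx)^q y⟩` (edge label `2q+1`)
to a torsion-free nilpotent group `N` identifies the images of the two generators. -/
theorem stmt_8 (q : ℕ) (hq : 1 ≤ q) (N : Type) [Group N] [Group.IsNilpotent N]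
    (hN : ∀ g : N, g ≠ 1 → ¬IsOfFinOrder g)
    (ρ : PresentedGroup (artinOddRels q) →* N) :
    ρ (PresentedGroup.of true) = ρ (PresentedGroup.of false) :=
  stmt_8_general q N ρ
end

section
/- Let R be a commutative ring and u₁, u₂ ∈ R³. Suppose there exists u₃ ∈ R³ with (u₁ × u₂) · u₃ = 1. Then {u₁, u₂, u₃} is a basis of R³, the submodule Span{u₁, u₂} is free of rank 2, is a direct summand of R³, and equals the kernel of the linear form v ↦ (u₁ × u₂) · v. -/
/-!
The triple product `(u₁ × u₂) · u₃` is `det [u₁, u₂, u₃]`, so the condition makes the three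
vectors a basis of `R³`. The linear form `f = (u₁ × u₂) · -` kills `u₁` and `u₂` and sends `u₃`
to `1`, hence `ker f` is a complement of `R u₃`. Since `Span{u₁, u₂} ≤ ker f` and
`Span{u₁, u₂} + R u₃ = R³`, the modular law forces `Span{u₁, u₂} = ker f`.
-/

open Matrix Submodule

section

variable {R M : Type*} [CommRing R] [AddCommGroup M] [Module R M]

theorem Module.Basis.exists_coe_eq_of_isUnit_det {ι : Type*} [Fintype ι] [DecidableEq ι]
    (e : Module.Basis ι R M) {v : ι → M} (hv : IsUnit (e.det v)) :
    ∃ b : Module.Basis ι R M, ⇑b = v := by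
  obtain ⟨hli, hspan⟩ := e.is_basis_iff_det.mpr hv
  exact ⟨.mk hli hspan.ge, Module.Basis.coe_mk _ _⟩

theorem LinearIndependent.exists_basis_span_pair {x y : M} (hli : LinearIndependent R ![x, y]) :
    ∃ b : Module.Basis (Fin 2) R (span R {x, y}), (b 0 : M) = x ∧ (b 1 : M) = y := by
  have hrange : Set.range ![x, y] = {x, y} := range_cons_cons_empty x y ![]
  exact ⟨(Module.Basis.span hli).map (LinearEquiv.ofEq _ _ (by rw [hrange])),
    congrArg Subtype.val (Module.Basis.span_apply hli 0),
    congrArg Subtype.val (Module.Basis.span_apply hli 1)⟩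

theorem LinearMap.isCompl_ker_span_singleton (f : M →ₗ[R] R) {w : M} (hw : f w = 1) :
    IsCompl (LinearMap.ker f) (R ∙ w) := by
  refine ⟨disjoint_def.mpr fun v hker hw' => ?_, codisjoint_iff_le_sup.mpr fun v _ => ?_⟩
  · obtain ⟨t, rfl⟩ := mem_span_singleton.mp hw'
    have ht : t = 0 := by simpa [hw] using hker
    simp [ht]
  · have hv : v - f v • w ∈ LinearMap.ker f := by simp [hw]
    simpa using add_mem_sup hv (smul_mem _ (f v) (mem_span_singleton_self w))

theorem LinearMap.eq_ker_of_le_of_sup_span_singleton_eq_top {f : M →ₗ[R] R} {p : Submodule R M}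
    {w : M} (hw : f w = 1) (hp : p ≤ LinearMap.ker f) (hsup : p ⊔ R ∙ w = ⊤) :
    p = LinearMap.ker f := by
  have hcompl := f.isCompl_ker_span_singleton hw
  exact eq_of_le_of_inf_le_of_sup_le (z := R ∙ w) hp
    (by simp [hcompl.inf_eq_bot]) (by simp [hsup])

end

section CrossProduct

variable {R : Type*} [CommRing R] {u₁ u₂ u₃ : Fin 3 → R}

theorem cross_dot_eq_det (u v w : Fin 3 → R) : (u ⨯₃ v) ⬝ᵥ w = det ![u, v, w] := by
  rw [dotProduct_comm, triple_product_permutation, triple_product_eq_det]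

theorem exists_basis_of_cross_dot_eq_one (h : (u₁ ⨯₃ u₂) ⬝ᵥ u₃ = 1) :
    ∃ b : Module.Basis (Fin 3) R (Fin 3 → R), ⇑b = ![u₁, u₂, u₃] :=
  (Pi.basisFun R (Fin 3)).exists_coe_eq_of_isUnit_det <| by
    rw [Pi.basisFun_det_apply]
    show IsUnit (det ![u₁, u₂, u₃])
    rw [← cross_dot_eq_det, h]
    exact isUnit_one

theorem span_pair_le_ker_cross_dot :
    span R {u₁, u₂} ≤ LinearMap.ker (dotProductBilin R R (u₁ ⨯₃ u₂)) := by
  rw [span_le, Set.insert_subset_iff, Set.singleton_subset_iff]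
  constructor <;> simp [dotProduct_comm (u₁ ⨯₃ u₂)]

theorem span_pair_eq_ker_cross_dot (h : (u₁ ⨯₃ u₂) ⬝ᵥ u₃ = 1) :
    span R {u₁, u₂} = LinearMap.ker (dotProductBilin R R (u₁ ⨯₃ u₂)) := by
  obtain ⟨b, hb⟩ := exists_basis_of_cross_dot_eq_one h
  refine LinearMap.eq_ker_of_le_of_sup_span_singleton_eq_top h span_pair_le_ker_cross_dot ?_
  rw [← span_union, ← b.span_eq, hb, range_cons, range_cons_cons_empty, Set.insert_union,
    Set.singleton_union, Set.singleton_union]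

end CrossProduct

/-- Let `R` be a commutative ring and `u₁, u₂ ∈ R³`.  If there exists `u₃ ∈ R³` with
`(u₁ × u₂) · u₃ = 1`, then `{u₁, u₂, u₃}` is a basis of `R³`, the submodule
`Span{u₁, u₂}` is free of rank `2` (with basis `{u₁, u₂}`), is a direct summand of
`R³`, and equals the kernel of the linear form `v ↦ (u₁ × u₂) · v`. -/
theorem stmt_13 (R : Type) [CommRing R] (u₁ u₂ u₃ : Fin 3 → R)
    (h : (crossProduct u₁ u₂) ⬝ᵥ u₃ = 1) :
    (∃ b : Module.Basis (Fin 3) R (Fin 3 → R), b 0 = u₁ ∧ b 1 = u₂ ∧ b 2 = u₃) ∧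
    (∃ bM : Module.Basis (Fin 2) R (Submodule.span R {u₁, u₂}),
      (bM 0 : Fin 3 → R) = u₁ ∧ (bM 1 : Fin 3 → R) = u₂) ∧
    (∃ N : Submodule R (Fin 3 → R), IsCompl (Submodule.span R {u₁, u₂}) N) ∧
    (∀ v : Fin 3 → R, v ∈ Submodule.span R {u₁, u₂} ↔ (crossProduct u₁ u₂) ⬝ᵥ v = 0) := by
  obtain ⟨b, hb⟩ := exists_basis_of_cross_dot_eq_one h
  have hker := span_pair_eq_ker_cross_dot h
  have hli : LinearIndependent R ![u₁, u₂] := by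
    have hsub : ![u₁, u₂] = b ∘ ![0, 1] := by
      ext i : 1
      fin_cases i <;> simp [hb]
    exact hsub ▸ b.linearIndependent.comp _ (by decide)
  refine ⟨⟨b, by simp [hb]⟩, hli.exists_basis_span_pair, ⟨R ∙ u₃, ?_⟩, fun v => ?_⟩
  · exact hker ▸ LinearMap.isCompl_ker_span_singleton _ h
  · rw [hker, LinearMap.mem_ker]
    rfl
end
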